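/- Let σ > 0, a ∈ ℝ, let x0 : ℕ → ℝ be a fixed real sequence, let (W_i)_{i∈ℕ} be i.i.d. centered Gaussian random variables of variance σ², and set Y_i = x0_i + W_i. Let h : ℕ → (0,∞) satisfy h(P) → 0 and 1/(P·h(P)) → 0 as P → ∞, and define A_h(t,a) = (√(σ² + h²)/h)·exp(−(t − a)²/(2h²)). Then Var[(1/P)·Σ_{i=1}^P A_{h(P)}(Y_i,a)] = (1/P²)·Σ_{i=1}^P Var[A_{h(P)}(Y_i,a)] → 0 as P → ∞. -/

import Mathlib

/-!
Each summand satisfies `Var ≤ E[A²] = ∫ A² φ ≤ ‖φ‖_∞ ∫ A²`, where `φ` is the `N(x0_i, σ²)` density,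
`‖φ‖_∞ = 1/(σ√(2π))` and `∫ A_h(t,a)² dt = √π (σ² + h²)/h`. Hence every summand has variance at
most `(σ² + h²)/(√2 σ h)`, and by independence the variance of the average is at most
`(σ² + h²)/(√2 σ) · 1/(P h)`, which tends to `0`.
-/

open MeasureTheory ProbabilityTheory Filter Real Topology
open scoped NNReal

/-- The scaled Gaussian kernel `A_h(t,a) = (√(σ²+h²)/h)·exp(−(t−a)²/(2h²))`. -/
noncomputable def kernelA (σ h t a : ℝ) : ℝ :=
  Real.sqrt (σ ^ 2 + h ^ 2) / h * Real.exp (-(t - a) ^ 2 / (2 * h ^ 2))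

section Gaussian

lemma gaussianPDFReal_le (m : ℝ) (v : ℝ≥0) (x : ℝ) :
    gaussianPDFReal m v x ≤ (√(2 * π * v))⁻¹ := by
  rw [gaussianPDFReal]
  refine mul_le_of_le_one_right (by positivity) (exp_le_one_iff.mpr ?_)
  exact div_nonpos_of_nonpos_of_nonneg (neg_nonpos.mpr (sq_nonneg _)) (by positivity)

lemma integral_gaussianReal_le_of_nonneg {m : ℝ} {v : ℝ≥0} (hv : v ≠ 0) {f : ℝ → ℝ}
    (hf₀ : 0 ≤ f) (hf : Integrable f) :
    ∫ x, f x ∂gaussianReal m v ≤ (√(2 * π * v))⁻¹ * ∫ x, f x := by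
  rw [integral_gaussianReal_eq_integral_smul hv, ← integral_const_mul]
  refine integral_mono_of_nonneg (ae_of_all _ fun x => ?_) (hf.const_mul _)
    (ae_of_all _ fun x => ?_)
  · exact smul_nonneg (gaussianPDFReal_nonneg m v x) (hf₀ x)
  · exact mul_le_mul_of_nonneg_right (gaussianPDFReal_le m v x) (hf₀ x)

variable {Ω : Type*} [MeasurableSpace Ω] {μ : Measure Ω} {W : Ω → ℝ} {m : ℝ} {v : ℝ≥0}

lemma aemeasurable_of_map_eq_gaussianReal (hW : μ.map W = gaussianReal m v) :
    AEMeasurable W μ :=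
  .of_map_ne_zero (by rw [hW]; exact IsProbabilityMeasure.ne_zero _)

lemma map_const_add_eq_gaussianReal (hW : μ.map W = gaussianReal m v) (c : ℝ) :
    μ.map (fun ω => c + W ω) = gaussianReal (m + c) v := by
  rw [← gaussianReal_map_const_add, ← hW, AEMeasurable.map_map_of_aemeasurable
    (measurable_const_add c).aemeasurable (aemeasurable_of_map_eq_gaussianReal hW)]
  rfl

end Gaussian

section Average

variable {Ω : Type*} [MeasurableSpace Ω] {μ : Measure Ω} {X : ℕ → Ω → ℝ}

lemma variance_average_eq (hX : iIndepFun X μ) (hX₂ : ∀ i, MemLp (X i) 2 μ) (n : ℕ) :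
    variance (fun ω => (1 / (n : ℝ)) * ∑ i ∈ Finset.range n, X i ω) μ
      = (1 / (n : ℝ) ^ 2) * ∑ i ∈ Finset.range n, variance (X i) μ := by
  rw [variance_const_mul, div_pow, one_pow]
  have hsum : (fun ω => ∑ i ∈ Finset.range n, X i ω) = ∑ i ∈ Finset.range n, X i := by
    funext ω; simp
  rw [hsum, IndepFun.variance_sum (fun i _ => hX₂ i) fun i _ j _ hij => hX.indepFun hij]

lemma variance_average_le (hX : iIndepFun X μ) (hX₂ : ∀ i, MemLp (X i) 2 μ) {C : ℝ}
    (hC : ∀ i, variance (X i) μ ≤ C) (n : ℕ) :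
    variance (fun ω => (1 / (n : ℝ)) * ∑ i ∈ Finset.range n, X i ω) μ ≤ C / n := by
  rw [variance_average_eq hX hX₂]
  rcases n.eq_zero_or_pos with rfl | hn
  · simp
  have hsum : ∑ i ∈ Finset.range n, variance (X i) μ ≤ n * C := by
    simpa using Finset.sum_le_card_nsmul (Finset.range n) _ _ fun i _ => hC i
  calc (1 / (n : ℝ) ^ 2) * ∑ i ∈ Finset.range n, variance (X i) μ
      ≤ (1 / (n : ℝ) ^ 2) * (n * C) := by gcongr
    _ = C / n := by field_simp

end Average

section Kernel

variable {σ h a : ℝ}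

lemma kernelA_nonneg (hh : 0 < h) (t : ℝ) : 0 ≤ kernelA σ h t a := by
  unfold kernelA; positivity

lemma kernelA_le (hh : 0 < h) (t : ℝ) : kernelA σ h t a ≤ √(σ ^ 2 + h ^ 2) / h := by
  unfold kernelA
  refine mul_le_of_le_one_right (by positivity) (exp_le_one_iff.mpr ?_)
  exact div_nonpos_of_nonpos_of_nonneg (neg_nonpos.mpr (sq_nonneg _)) (by positivity)

lemma continuous_kernelA : Continuous fun t => kernelA σ h t a := by
  unfold kernelA; fun_prop

lemma kernelA_sq (t : ℝ) :
    kernelA σ h t a ^ 2 = (σ ^ 2 + h ^ 2) / h ^ 2 * exp (-(1 / h ^ 2) * (t - a) ^ 2) := by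
  rw [kernelA, mul_pow, div_pow, sq_sqrt (by positivity), ← exp_nat_mul]
  congr 2
  push_cast
  ring

lemma integrable_kernelA_sq (hh : h ≠ 0) : Integrable fun t => kernelA σ h t a ^ 2 := by
  simp_rw [kernelA_sq]
  exact ((integrable_exp_neg_mul_sq (by positivity)).comp_sub_right a).const_mul _

lemma integral_kernelA_sq (hh : 0 < h) :
    ∫ t, kernelA σ h t a ^ 2 = (σ ^ 2 + h ^ 2) / h * √π := by
  simp_rw [kernelA_sq]
  rw [integral_const_mul,
    integral_sub_right_eq_self (fun t => exp (-(1 / h ^ 2) * t ^ 2)) a, integral_gaussian,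
    one_div, div_inv_eq_mul, sqrt_mul pi_pos.le, sqrt_sq hh.le]
  field_simp

lemma integral_kernelA_sq_gaussianReal_le (hσ : 0 < σ) (hh : 0 < h) (m : ℝ) :
    ∫ t, kernelA σ h t a ^ 2 ∂gaussianReal m ⟨σ ^ 2, sq_nonneg σ⟩
      ≤ (σ ^ 2 + h ^ 2) / (h * σ * √2) := by
  have hv : (⟨σ ^ 2, sq_nonneg σ⟩ : ℝ≥0) ≠ 0 := by
    simpa [← NNReal.coe_eq_zero] using hσ.ne'
  refine (integral_gaussianReal_le_of_nonneg hv (fun t => sq_nonneg _)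
    (integrable_kernelA_sq hh.ne')).trans_eq ?_
  change (√(2 * π * σ ^ 2))⁻¹ * _ = _
  rw [integral_kernelA_sq hh, sqrt_mul (by positivity), sqrt_mul (by norm_num),
    sqrt_sq hσ.le]
  have : √π ≠ 0 := (sqrt_pos.mpr pi_pos).ne'
  field_simp

variable {Ω : Type*} [MeasurableSpace Ω] {μ : Measure Ω}

lemma memLp_kernelA_comp [IsFiniteMeasure μ] {Y : Ω → ℝ} (hY : AEMeasurable Y μ) (hh : 0 < h)
    (p : ENNReal) : MemLp (fun ω => kernelA σ h (Y ω) a) p μ :=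
  .of_bound (continuous_kernelA.measurable.comp_aemeasurable hY).aestronglyMeasurable _
    (ae_of_all _ fun ω => by
      rw [norm_of_nonneg (kernelA_nonneg hh _)]; exact kernelA_le hh _)

lemma variance_kernelA_comp_le [IsProbabilityMeasure μ] {Y : Ω → ℝ} {m : ℝ}
    (hY : μ.map Y = gaussianReal m ⟨σ ^ 2, sq_nonneg σ⟩) (hσ : 0 < σ) (hh : 0 < h) :
    variance (fun ω => kernelA σ h (Y ω) a) μ ≤ (σ ^ 2 + h ^ 2) / (h * σ * √2) := by
  have hYm := aemeasurable_of_map_eq_gaussianReal hY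
  have hAm : AEStronglyMeasurable (fun ω => kernelA σ h (Y ω) a) μ :=
    (continuous_kernelA.measurable.comp_aemeasurable hYm).aestronglyMeasurable
  calc variance (fun ω => kernelA σ h (Y ω) a) μ
      ≤ ∫ ω, kernelA σ h (Y ω) a ^ 2 ∂μ := variance_le_expectation_sq hAm
    _ = ∫ t, kernelA σ h t a ^ 2 ∂gaussianReal m ⟨σ ^ 2, sq_nonneg σ⟩ := by
        rw [← hY, integral_map (f := fun t => kernelA σ h t a ^ 2) hYm
          (continuous_kernelA.pow 2).aestronglyMeasurable]
    _ ≤ (σ ^ 2 + h ^ 2) / (h * σ * √2) := integral_kernelA_sq_gaussianReal_le hσ hh m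

end Kernel

theorem kernel_average_variance_vanishes_general
    {Ω : Type*} [MeasurableSpace Ω] (μpr : Measure Ω) [IsProbabilityMeasure μpr]
    (σ a : ℝ) (hσ : 0 < σ)
    (x0 : ℕ → ℝ) (W : ℕ → Ω → ℝ)
    (hindep : iIndepFun W μpr)
    (hdist : ∀ i, Measure.map (W i) μpr = gaussianReal 0 ⟨σ ^ 2, sq_nonneg σ⟩)
    (h : ℕ → ℝ) (hpos : ∀ P, 0 < h P)
    (hh0 : Tendsto h atTop (nhds 0))
    (hPh : Tendsto (fun P : ℕ => 1 / ((P : ℝ) * h P)) atTop (nhds 0)) :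
    (∀ P : ℕ,
      variance (fun ω => (1 / (P : ℝ)) *
          ∑ i ∈ Finset.range P, kernelA σ (h P) (x0 i + W i ω) a) μpr
        = (1 / (P : ℝ) ^ 2) *
            ∑ i ∈ Finset.range P,
              variance (fun ω => kernelA σ (h P) (x0 i + W i ω) a) μpr) ∧
    Tendsto
      (fun P : ℕ =>
        variance (fun ω => (1 / (P : ℝ)) *
          ∑ i ∈ Finset.range P, kernelA σ (h P) (x0 i + W i ω) a) μpr)
      atTop (nhds 0) := by
  have hY : ∀ i, μpr.map (fun ω => x0 i + W i ω) = gaussianReal (0 + x0 i) ⟨σ ^ 2, _⟩ :=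
    fun i => map_const_add_eq_gaussianReal (hdist i) (x0 i)
  have hindepP : ∀ P, iIndepFun (fun i ω => kernelA σ (h P) (x0 i + W i ω) a) μpr := fun P =>
    hindep.comp _ fun i => continuous_kernelA.measurable.comp (measurable_const_add (x0 i))
  have hL2 : ∀ P i, MemLp (fun ω => kernelA σ (h P) (x0 i + W i ω) a) 2 μpr := fun P i =>
    memLp_kernelA_comp (aemeasurable_of_map_eq_gaussianReal (hY i)) (hpos P) 2
  refine ⟨fun P => variance_average_eq (hindepP P) (hL2 P) P, ?_⟩
  have hbound : Tendsto (fun P : ℕ => (σ ^ 2 + h P ^ 2) / (h P * σ * √2) / P) atTop (𝓝 0) := by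
    have := (((tendsto_const_nhds (x := σ ^ 2)).add (hh0.pow 2)).div_const (σ * √2)).mul hPh
    rw [mul_zero] at this
    exact this.congr fun P => by ring
  exact squeeze_zero (fun P => variance_nonneg _ _) (fun P => variance_average_le (hindepP P)
    (hL2 P) (fun i => variance_kernelA_comp_le (hY i) hσ (hpos P)) P) hbound

/-- `Var[(1/P)∑_{i<P} A_{h(P)}(Y_i,a)] = (1/P²)∑_{i<P} Var[A_{h(P)}(Y_i,a)]`
and this quantity tends to `0` as `P → ∞`. -/
theorem kernel_average_variance_vanishes
    {Ω : Type*} [MeasurableSpace Ω] (μpr : Measure Ω) [IsProbabilityMeasure μpr]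
    (σ a : ℝ) (hσ : 0 < σ)
    (x0 : ℕ → ℝ) (W : ℕ → Ω → ℝ)
    (hmeas : ∀ i, Measurable (W i))
    (hindep : iIndepFun W μpr)
    (hdist : ∀ i, Measure.map (W i) μpr = gaussianReal 0 ⟨σ ^ 2, sq_nonneg σ⟩)
    (h : ℕ → ℝ) (hpos : ∀ P, 0 < h P)
    (hh0 : Tendsto h atTop (nhds 0))
    (hPh : Tendsto (fun P : ℕ => 1 / ((P : ℝ) * h P)) atTop (nhds 0)) :
    (∀ P : ℕ,
      variance (fun ω => (1 / (P : ℝ)) *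
          ∑ i ∈ Finset.range P, kernelA σ (h P) (x0 i + W i ω) a) μpr
        = (1 / (P : ℝ) ^ 2) *
            ∑ i ∈ Finset.range P,
              variance (fun ω => kernelA σ (h P) (x0 i + W i ω) a) μpr) ∧
    Tendsto
      (fun P : ℕ =>
        variance (fun ω => (1 / (P : ℝ)) *
          ∑ i ∈ Finset.range P, kernelA σ (h P) (x0 i + W i ω) a) μpr)
      atTop (nhds 0) :=
  kernel_average_variance_vanishes_general μpr σ a hσ x0 W hindep hdist h hpos hh0 hPh
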